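/- arXiv:2312.12313 — 8 statements merged into one kernel-verified Lean document; each statement's English description precedes it below -/
import Mathlib

section
/- For every integer n ≥ 1, the zigzag snake graph Z_n has exactly n+1 perfect matchings. -/
namespace Zigzag

/-- `cpt i` is the distinguished corner `c_i` of the `i`-th tile (for `1 ≤ i`):
`c_1 = (0,0)` and, for `1 ≤ i`, `c_{i+1} = c_i + (0,1)` if `i` is odd and
`c_{i+1} = c_i + (1,0)` if `i` is even. -/
def cpt : ℕ → ℤ × ℤ
  | 0 => (0, 0)
  | 1 => (0, 0)
  | i + 2 => cpt (i + 1) + (if (i + 1) % 2 = 1 then ((0 : ℤ), (1 : ℤ)) else ((1 : ℤ), (0 : ℤ)))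

/-- The `i`-th tile: the four lattice points `{c_i, c_i+(1,0), c_i+(0,1), c_i+(1,1)}`. -/
def tile (i : ℕ) : Set (ℤ × ℤ) :=
  {cpt i, cpt i + (1, 0), cpt i + (0, 1), cpt i + (1, 1)}

/-- The vertex set of the zigzag snake graph `Z n`: the union of the `n` tiles. -/
def Vset (n : ℕ) : Set (ℤ × ℤ) := ⋃ i ∈ Set.Icc 1 n, tile i

/-- The zigzag snake graph `Z n`: two lattice points are adjacent exactly when they lie at
Euclidean distance 1 from each other and both belong to a common tile. -/
def Zgraph (n : ℕ) : SimpleGraph (ℤ × ℤ) where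
  Adj a b := ((a.1 - b.1) ^ 2 + (a.2 - b.2) ^ 2 = 1) ∧
    ∃ i : ℕ, 1 ≤ i ∧ i ≤ n ∧ a ∈ tile i ∧ b ∈ tile i
  symm := by
    constructor
    rintro a b ⟨hd, i, hi1, hi2, ha, hb⟩
    exact ⟨by linear_combination hd, i, hi1, hi2, hb, ha⟩
  loopless := by
    constructor
    rintro a ⟨hd, -⟩
    simp at hd

/-- A perfect matching of `Z n`: a set of edges of `Z n` such that every vertex of `Z n`
belongs to exactly one edge of the set. -/
def IsPerfectMatching (n : ℕ) (M : Set (Sym2 (ℤ × ℤ))) : Prop :=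
  M ⊆ (Zgraph n).edgeSet ∧ ∀ v ∈ Vset n, ∃! e, e ∈ M ∧ v ∈ e

end Zigzag

/-!
Write `spine i` for the corner `c_i` and `corner i` for the fourth vertex of the `i`-th tile, the
one off the staircase path `spine 1, …, spine (n + 2)`. Each `corner i` has only the two neighbours
`spine i` and `spine (i + 2)`. In a perfect matching let `j` be the least index such that
`corner (j + 1)` is not matched down to `spine (j + 1)`: then `spine (j + 1)` can only be matched
along the path to `spine (j + 2)`, and this forces every corner above `j` to be matched up.
Hence the perfect matchings are exactly the `n + 1` matchings `stdMatching n j`, `j ≤ n`, which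
are distinct because their unique path edges differ.
-/

lemma Int.sq_add_sq_eq_one_iff {a b : ℤ} :
    a ^ 2 + b ^ 2 = 1 ↔ (a = 0 ∧ (b = 1 ∨ b = -1)) ∨ (b = 0 ∧ (a = 1 ∨ a = -1)) := by
  constructor
  · intro h
    have ha : |a| ≤ 1 := sq_le_one_iff_abs_le_one a |>.1 (by nlinarith [sq_nonneg b])
    have hb : |b| ≤ 1 := sq_le_one_iff_abs_le_one b |>.1 (by nlinarith [sq_nonneg a])
    rw [abs_le] at ha hb
    obtain ⟨ha1, ha2⟩ := ha
    obtain ⟨hb1, hb2⟩ := hb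
    interval_cases a <;> interval_cases b <;> simp_all
  · rintro (⟨rfl, rfl | rfl⟩ | ⟨rfl, rfl | rfl⟩) <;> norm_num

namespace Zigzag

def spine (i : ℕ) : ℤ × ℤ := (((i : ℤ) - 1) / 2, (i : ℤ) / 2)

def corner (i : ℕ) : ℤ × ℤ := spine i + ((i : ℤ) % 2, 1 - (i : ℤ) % 2)

@[simp] lemma spine_inj {i j : ℕ} : spine i = spine j ↔ i = j := by
  simp only [spine, Prod.ext_iff]; omega

@[simp] lemma corner_inj {i j : ℕ} : corner i = corner j ↔ i = j := by
  simp only [corner, spine, Prod.ext_iff, Prod.fst_add, Prod.snd_add]; omega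

@[simp] lemma spine_ne_corner (i j : ℕ) : spine i ≠ corner j := by
  simp only [corner, spine, ne_eq, Prod.ext_iff, Prod.fst_add, Prod.snd_add]; omega

@[simp] lemma corner_ne_spine (i j : ℕ) : corner i ≠ spine j := (spine_ne_corner j i).symm

lemma cpt_eq_spine {i : ℕ} (hi : 1 ≤ i) : cpt i = spine i := by
  induction i using Nat.strong_induction_on with
  | _ i ih =>
    match i, hi with
    | 1, _ => rfl
    | i + 2, _ =>
      rw [cpt, ih (i + 1) (by omega) (by omega)]
      split_ifs <;> simp only [spine, Prod.ext_iff, Prod.fst_add, Prod.snd_add] <;> omega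

lemma tile_eq {i : ℕ} (hi : 1 ≤ i) :
    tile i = {spine i, corner i, spine (i + 1), spine (i + 2)} := by
  ext x
  simp only [tile, cpt_eq_spine hi, corner, spine, Set.mem_insert_iff, Set.mem_singleton_iff,
    Prod.ext_iff, Prod.fst_add, Prod.snd_add]
  omega

def cornerDown (i : ℕ) : Sym2 (ℤ × ℤ) := s(spine i, corner i)

def cornerUp (i : ℕ) : Sym2 (ℤ × ℤ) := s(corner i, spine (i + 2))

def spineEdge (i : ℕ) : Sym2 (ℤ × ℤ) := s(spine i, spine (i + 1))

lemma mem_vset_iff {n : ℕ} (hn : 1 ≤ n) {v : ℤ × ℤ} :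
    v ∈ Vset n ↔ (∃ m, 1 ≤ m ∧ m ≤ n + 2 ∧ v = spine m) ∨ ∃ m, 1 ≤ m ∧ m ≤ n ∧ v = corner m := by
  simp only [Vset, Set.mem_iUnion, Set.mem_Icc, exists_prop]
  constructor
  · rintro ⟨i, ⟨hi1, hin⟩, hv⟩
    rw [tile_eq hi1] at hv
    rcases hv with rfl | rfl | rfl | rfl
    exacts [.inl ⟨i, hi1, by omega, rfl⟩, .inr ⟨i, hi1, hin, rfl⟩,
      .inl ⟨i + 1, by omega, by omega, rfl⟩, .inl ⟨i + 2, by omega, by omega, rfl⟩]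
  · rintro (⟨m, hm1, hmn, rfl⟩ | ⟨m, hm1, hmn, rfl⟩)
    · obtain hm | rfl | rfl : m ≤ n ∨ m = n + 1 ∨ m = n + 2 := by omega
      · exact ⟨m, ⟨hm1, hm⟩, by simp [tile_eq hm1]⟩
      all_goals exact ⟨n, ⟨hn, le_rfl⟩, by simp [tile_eq hn]⟩
    · exact ⟨m, ⟨hm1, hmn⟩, by simp [tile_eq hm1]⟩

lemma zgraph_adj_cases {n : ℕ} {x y : ℤ × ℤ} (h : (Zgraph n).Adj x y) :
    ∃ k, 1 ≤ k ∧ k ≤ n ∧ (s(x, y) = cornerDown k ∨ s(x, y) = cornerUp k ∨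
      s(x, y) = spineEdge k ∨ s(x, y) = spineEdge (k + 1)) := by
  obtain ⟨hd, k, hk1, hkn, hx, hy⟩ := h
  refine ⟨k, hk1, hkn, ?_⟩
  rw [Int.sq_add_sq_eq_one_iff] at hd
  rw [tile_eq hk1] at hx hy
  simp only [Set.mem_insert_iff, Set.mem_singleton_iff] at hx hy
  rcases hx with rfl | rfl | rfl | rfl <;> rcases hy with rfl | rfl | rfl | rfl <;>
    simp only [cornerDown, cornerUp, spineEdge, Sym2.eq_swap, true_or, or_true] <;>
    simp only [corner, spine, Prod.fst_add, Prod.snd_add] at hd <;> omega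

lemma mem_edgeSet_zgraph_iff {n : ℕ} (hn : 1 ≤ n) {e : Sym2 (ℤ × ℤ)} :
    e ∈ (Zgraph n).edgeSet ↔ (∃ k, 1 ≤ k ∧ k ≤ n ∧ e = cornerDown k) ∨
      (∃ k, 1 ≤ k ∧ k ≤ n ∧ e = cornerUp k) ∨ ∃ k, 1 ≤ k ∧ k ≤ n + 1 ∧ e = spineEdge k := by
  constructor
  · induction e using Sym2.ind with
    | _ x y =>
      intro h
      obtain ⟨k, hk1, hkn, h | h | h | h⟩ := zgraph_adj_cases h
      exacts [.inl ⟨k, hk1, hkn, h⟩, .inr (.inl ⟨k, hk1, hkn, h⟩),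
        .inr (.inr ⟨k, hk1, by omega, h⟩), .inr (.inr ⟨k + 1, by omega, by omega, h⟩)]
  · rintro (⟨k, hk1, hkn, rfl⟩ | ⟨k, hk1, hkn, rfl⟩ | ⟨k, hk1, hkn, rfl⟩)
    · refine ⟨Int.sq_add_sq_eq_one_iff.2 ?_, k, hk1, hkn, by simp [tile_eq hk1],
        by simp [tile_eq hk1]⟩
      simp only [corner, spine, Prod.fst_add, Prod.snd_add]; omega
    · refine ⟨Int.sq_add_sq_eq_one_iff.2 ?_, k, hk1, hkn, by simp [tile_eq hk1],
        by simp [tile_eq hk1]⟩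
      simp only [corner, spine, Prod.fst_add, Prod.snd_add]; omega
    · obtain ⟨t, ht1, htn, hkt⟩ : ∃ t, 1 ≤ t ∧ t ≤ n ∧ (k = t ∨ k = t + 1) :=
        ⟨min k n, by omega, by omega, by omega⟩
      refine ⟨Int.sq_add_sq_eq_one_iff.2 ?_, t, ht1, htn, ?_, ?_⟩
      · simp only [spine]; omega
      all_goals simp only [tile_eq ht1, Set.mem_insert_iff, Set.mem_singleton_iff, spine_inj,
        spine_ne_corner]; omega

section Edges

variable {n : ℕ} {e : Sym2 (ℤ × ℤ)}

lemma mem_vset_of_mem_edgeSet (he : e ∈ (Zgraph n).edgeSet) {v : ℤ × ℤ} (hv : v ∈ e) :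
    v ∈ Vset n := by
  induction e using Sym2.ind with
  | _ x y =>
    obtain ⟨-, k, hk1, hkn, hx, hy⟩ := he
    simp only [Vset, Set.mem_iUnion, Set.mem_Icc, exists_prop]
    rcases Sym2.mem_iff.1 hv with rfl | rfl
    exacts [⟨k, ⟨hk1, hkn⟩, hx⟩, ⟨k, ⟨hk1, hkn⟩, hy⟩]

lemma eq_of_corner_mem (hn : 1 ≤ n) (he : e ∈ (Zgraph n).edgeSet) {m : ℕ} (hm : corner m ∈ e) :
    e = cornerDown m ∨ e = cornerUp m := by
  rcases (mem_edgeSet_zgraph_iff hn).1 he with ⟨k, -, -, rfl⟩ | ⟨k, -, -, rfl⟩ | ⟨k, -, -, rfl⟩ <;>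
    simp_all [cornerDown, cornerUp, spineEdge]

lemma eq_of_spine_mem (hn : 1 ≤ n) (he : e ∈ (Zgraph n).edgeSet) {m : ℕ} (hm : spine m ∈ e) :
    e = cornerDown m ∨ e = spineEdge m ∨ (∃ k, 1 ≤ k ∧ m = k + 1 ∧ e = spineEdge k) ∨
      ∃ k, 1 ≤ k ∧ m = k + 2 ∧ e = cornerUp k := by
  rcases (mem_edgeSet_zgraph_iff hn).1 he with ⟨k, hk1, -, rfl⟩ | ⟨k, hk1, -, rfl⟩ |
    ⟨k, hk1, -, rfl⟩ <;> simp only [cornerDown, cornerUp, spineEdge, Sym2.mem_iff, spine_inj,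
      spine_ne_corner, false_or, or_false] at hm
  · exact .inl (by rw [hm])
  · exact .inr (.inr (.inr ⟨k, hk1, hm, rfl⟩))
  · rcases hm with rfl | rfl
    exacts [.inr (.inl rfl), .inr (.inr (.inl ⟨k, hk1, rfl, rfl⟩))]

end Edges

namespace IsPerfectMatching

variable {n : ℕ} {M : Set (Sym2 (ℤ × ℤ))}

lemma eq_of_mem_of_mem (hM : IsPerfectMatching n M) {v : ℤ × ℤ} (hv : v ∈ Vset n)
    {e f : Sym2 (ℤ × ℤ)} (he : e ∈ M) (hf : f ∈ M) (hve : v ∈ e) (hvf : v ∈ f) : e = f :=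
  (hM.2 v hv).unique ⟨he, hve⟩ ⟨hf, hvf⟩

lemma eq_of_subset {M' : Set (Sym2 (ℤ × ℤ))} (hM : IsPerfectMatching n M)
    (hM' : IsPerfectMatching n M') (h : M' ⊆ M) : M = M' := by
  refine Set.Subset.antisymm (fun e he => ?_) h
  have hv := mem_vset_of_mem_edgeSet (hM.1 he) e.out_fst_mem
  obtain ⟨f, ⟨hf, hvf⟩, -⟩ := hM'.2 _ hv
  rwa [hM.eq_of_mem_of_mem hv he (h hf) e.out_fst_mem hvf]

end IsPerfectMatching

def stdMatching (n j : ℕ) : Set (Sym2 (ℤ × ℤ)) :=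
  {e | (∃ k, 1 ≤ k ∧ k ≤ j ∧ e = cornerDown k) ∨ e = spineEdge (j + 1) ∨
    ∃ k, j + 1 ≤ k ∧ k ≤ n ∧ e = cornerUp k}

section StdMatching

variable {n j : ℕ}

lemma stdMatching_subset_edgeSet (hn : 1 ≤ n) (hj : j ≤ n) :
    stdMatching n j ⊆ (Zgraph n).edgeSet := by
  rintro e (⟨k, hk1, hkj, rfl⟩ | rfl | ⟨k, hk1, hkn, rfl⟩) <;> rw [mem_edgeSet_zgraph_iff hn]
  exacts [.inl ⟨k, hk1, hkj.trans hj, rfl⟩, .inr (.inr ⟨j + 1, by omega, by omega, rfl⟩),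
    .inr (.inl ⟨k, by omega, hkn, rfl⟩)]

lemma stdMatching_eq_of_mem_of_mem {e f : Sym2 (ℤ × ℤ)} (he : e ∈ stdMatching n j)
    (hf : f ∈ stdMatching n j) {v : ℤ × ℤ} (hve : v ∈ e) (hvf : v ∈ f) : e = f := by
  rcases he with ⟨k, hk1, hkj, rfl⟩ | rfl | ⟨k, hk1, hkn, rfl⟩ <;>
    rcases hf with ⟨l, hl1, hlj, rfl⟩ | rfl | ⟨l, hl1, hln, rfl⟩ <;>
    simp only [cornerDown, cornerUp, spineEdge, Sym2.mem_iff] at hve hvf <;>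
    rcases hve with rfl | rfl <;> simp at hvf <;> first | rfl | omega | (subst hvf; rfl)

lemma isPerfectMatching_stdMatching (hn : 1 ≤ n) (hj : j ≤ n) :
    IsPerfectMatching n (stdMatching n j) := by
  refine ⟨stdMatching_subset_edgeSet hn hj, fun v hv => ?_⟩
  obtain ⟨e, he, hve⟩ : ∃ e ∈ stdMatching n j, v ∈ e := by
    rcases (mem_vset_iff hn).1 hv with ⟨m, hm1, hmn, rfl⟩ | ⟨m, hm1, hmn, rfl⟩
    · obtain hm | hm | hm : m ≤ j ∨ j < m ∧ m ≤ j + 2 ∨ j + 3 ≤ m := by omega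
      · exact ⟨cornerDown m, .inl ⟨m, hm1, hm, rfl⟩, Sym2.mem_mk_left _ _⟩
      · exact ⟨spineEdge (j + 1), .inr (.inl rfl), by simp [spineEdge]; omega⟩
      · exact ⟨cornerUp (m - 2), .inr (.inr ⟨m - 2, by omega, by omega, rfl⟩),
          by simp [cornerUp]; omega⟩
    · obtain hm | hm : m ≤ j ∨ j + 1 ≤ m := by omega
      · exact ⟨cornerDown m, .inl ⟨m, hm1, hm, rfl⟩, Sym2.mem_mk_right _ _⟩
      · exact ⟨cornerUp m, .inr (.inr ⟨m, hm, hmn, rfl⟩), Sym2.mem_mk_left _ _⟩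
  exact ⟨e, ⟨he, hve⟩, fun f ⟨hf, hvf⟩ => stdMatching_eq_of_mem_of_mem hf he hvf hve⟩

lemma stdMatching_injective (n : ℕ) : Function.Injective (stdMatching n) := by
  intro j j' h
  have : spineEdge (j + 1) ∈ stdMatching n j' := h ▸ .inr (.inl rfl)
  rcases this with ⟨k, -, -, h⟩ | h | ⟨k, -, -, h⟩
  · simp [cornerDown, spineEdge] at h
  · simp [spineEdge] at h; omega
  · simp [cornerUp, spineEdge] at h

end StdMatching

namespace IsPerfectMatching

variable {n : ℕ} {M : Set (Sym2 (ℤ × ℤ))}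

lemma cornerDown_mem_or_cornerUp_mem (hn : 1 ≤ n) (hM : IsPerfectMatching n M) {i : ℕ}
    (hi1 : 1 ≤ i) (hin : i ≤ n) : cornerDown i ∈ M ∨ cornerUp i ∈ M := by
  obtain ⟨e, ⟨he, hie⟩, -⟩ := hM.2 (corner i) ((mem_vset_iff hn).2 (.inr ⟨i, hi1, hin, rfl⟩))
  rcases eq_of_corner_mem hn (hM.1 he) hie with rfl | rfl
  exacts [.inl he, .inr he]

lemma spineEdge_mem (hn : 1 ≤ n) (hM : IsPerfectMatching n M) {j : ℕ} (hjn : j ≤ n)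
    (hdown : ∀ k, 1 ≤ k → k ≤ j → cornerDown k ∈ M) (hj : cornerDown (j + 1) ∉ M) :
    spineEdge (j + 1) ∈ M := by
  obtain ⟨e, ⟨he, hje⟩, -⟩ :=
    hM.2 (spine (j + 1)) ((mem_vset_iff hn).2 (.inl ⟨j + 1, by omega, by omega, rfl⟩))
  rcases eq_of_spine_mem hn (hM.1 he) hje with rfl | rfl | ⟨k, hk1, hjk, rfl⟩ | ⟨k, hk1, hjk, rfl⟩
  · exact absurd he hj
  · exact he
  · have := hM.eq_of_mem_of_mem ((mem_vset_iff hn).2 (.inl ⟨k, hk1, by omega, rfl⟩)) he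
      (hdown k hk1 (by omega)) (Sym2.mem_mk_left _ _) (Sym2.mem_mk_left _ _)
    simp [spineEdge, cornerDown] at this
  · have := hM.eq_of_mem_of_mem ((mem_vset_iff hn).2 (.inr ⟨k, hk1, by omega, rfl⟩)) he
      (hdown k hk1 (by omega)) (Sym2.mem_mk_left _ _) (Sym2.mem_mk_right _ _)
    simp [cornerUp, cornerDown] at this

lemma cornerUp_mem (hn : 1 ≤ n) (hM : IsPerfectMatching n M) {j : ℕ}
    (hj : spineEdge (j + 1) ∈ M) {k : ℕ} (hjk : j + 1 ≤ k) (hkn : k ≤ n) : cornerUp k ∈ M := by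
  induction k using Nat.strong_induction_on with
  | _ k ih =>
    refine (hM.cornerDown_mem_or_cornerUp_mem hn (by omega) hkn).resolve_left fun hk => ?_
    obtain ⟨f, hf, hkf, hne⟩ : ∃ f ∈ M, spine k ∈ f ∧ f ≠ cornerDown k := by
      obtain hk' | hk' : k ≤ j + 2 ∨ j + 3 ≤ k := by omega
      · exact ⟨spineEdge (j + 1), hj, by simp [spineEdge]; omega, by simp [spineEdge, cornerDown]⟩
      · exact ⟨cornerUp (k - 2), ih (k - 2) (by omega) (by omega) (by omega),
          by simp [cornerUp]; omega, by simp [cornerUp, cornerDown]; omega⟩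
    exact hne (hM.eq_of_mem_of_mem ((mem_vset_iff hn).2 (.inl ⟨k, by omega, by omega, rfl⟩))
      hf hk hkf (Sym2.mem_mk_left _ _))

lemma exists_stdMatching_subset (hn : 1 ≤ n) (hM : IsPerfectMatching n M) :
    ∃ j ≤ n, stdMatching n j ⊆ M := by
  classical
  have hlast : cornerDown (n + 1) ∉ M := fun h => by
    have := mem_vset_of_mem_edgeSet (hM.1 h) (Sym2.mem_mk_right _ _)
    simp [mem_vset_iff hn] at this
  have hex : ∃ j, cornerDown (j + 1) ∉ M := ⟨n, hlast⟩
  have hjn : Nat.find hex ≤ n := Nat.find_min' hex hlast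
  have hdown : ∀ k, 1 ≤ k → k ≤ Nat.find hex → cornerDown k ∈ M := fun k hk1 hkj => by
    simpa [Nat.sub_add_cancel hk1] using Nat.find_min hex (show k - 1 < Nat.find hex by omega)
  have hspine := hM.spineEdge_mem hn hjn hdown (Nat.find_spec hex)
  refine ⟨Nat.find hex, hjn, ?_⟩
  rintro e (⟨k, hk1, hkj, rfl⟩ | rfl | ⟨k, hjk, hkn, rfl⟩)
  exacts [hdown k hk1 hkj, hspine, hM.cornerUp_mem hn hspine hjk hkn]

end IsPerfectMatching

end Zigzag

/-- For every integer `n ≥ 1`, the zigzag snake graph `Z n` has exactly `n + 1`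
perfect matchings. -/
theorem statement_0 (n : ℕ) (hn : 1 ≤ n) :
    {M : Set (Sym2 (ℤ × ℤ)) | Zigzag.IsPerfectMatching n M}.ncard = n + 1 := by
  open Zigzag in
  have hset : {M | IsPerfectMatching n M} = stdMatching n '' Set.Iic n := by
    ext M
    refine ⟨fun hM => ?_, ?_⟩
    · obtain ⟨j, hjn, hsub⟩ := hM.exists_stdMatching_subset hn
      exact ⟨j, hjn, (hM.eq_of_subset (isPerfectMatching_stdMatching hn hjn) hsub).symm⟩
    · rintro ⟨j, hjn, rfl⟩
      exact isPerfectMatching_stdMatching hn hjn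
  rw [hset, (Zigzag.stdMatching_injective n).injOn.ncard_image, ← Finset.coe_Iic,
    Set.ncard_coe_finset, Nat.card_Iic]
end

section
/- Let 𝓘 be a maximal nested collection on the vertex set V of a finite tree Γ, and let S ⊆ V be a nonempty connected set that is rooted with respect to 𝓘. Then for every I ∈ 𝓘 there is at most one vertex v ∈ S such that I and {v} are incompatible. -/
namespace Paper

variable {V : Type*}

/-- The subgraph of `G` induced on `S` is connected (any two vertices of `S` are joined
by a walk inside `S`). -/
def Conn (G : SimpleGraph V) (S : Set V) : Prop := (G.induce S).Preconnected

/-- `C` is a connected component of (the subgraph of `G` induced on) `U`: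
a maximal nonempty connected subset of `U`. -/
def IsCompOf (G : SimpleGraph V) (C U : Set V) : Prop :=
  C.Nonempty ∧ C ⊆ U ∧ Conn G C ∧
    ∀ D : Set V, C ⊆ D → D ⊆ U → Conn G D → D = C

/-- A nested collection on (the vertex set of) `G`: a family of nonempty connected
subsets such that (1) any two members are nested or disjoint, and (2) the connected
components of the union of any pairwise disjoint subfamily are exactly the members of
that subfamily. -/
def Nested (G : SimpleGraph V) (𝓘 : Set (Set V)) : Prop :=
  (∀ S ∈ 𝓘, S.Nonempty ∧ Conn G S) ∧
  (∀ S ∈ 𝓘, ∀ T ∈ 𝓘, S ⊆ T ∨ T ⊆ S ∨ S ∩ T = ∅) ∧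
  (∀ 𝓙 ⊆ 𝓘, (𝓙.Pairwise fun A B => A ∩ B = ∅) →
    ∀ C : Set V, IsCompOf G C (⋃₀ 𝓙) ↔ C ∈ 𝓙)

/-- A maximal nested collection: a nested collection whose union is all of `V` and
which is not properly contained in any other nested collection. -/
def MaxNested (G : SimpleGraph V) (𝓘 : Set (Set V)) : Prop :=
  Nested G 𝓘 ∧ ⋃₀ 𝓘 = Set.univ ∧
    ∀ 𝓙 : Set (Set V), Nested G 𝓙 → 𝓘 ⊆ 𝓙 → 𝓙 = 𝓘

/-- `Iv` assigns to each vertex `v` the smallest element of `𝓘` containing `v`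
(denoted `I_v`). -/
def IsLeastContaining (𝓘 : Set (Set V)) (Iv : V → Set V) : Prop :=
  ∀ v : V, Iv v ∈ 𝓘 ∧ v ∈ Iv v ∧ ∀ J ∈ 𝓘, v ∈ J → Iv v ⊆ J

/-- The vertex set `[x,y]` of the unique path in a tree `G` from `x` to `y`:
the vertices lying on every path from `x` to `y`. -/
def interval (G : SimpleGraph V) (x y : V) : Set V :=
  {u | ∀ p : G.Walk x y, p.IsPath → u ∈ p.support}

/-- `S` is rooted with respect to the nested collection (with least-member function
`Iv`): `S` is nonempty, connected, and, `m` denoting the unique element of `S` with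
`S ⊆ I_m`, for all `i, j ∈ S` one has `i ∈ I_j` iff `j ∈ [i, m]`. -/
def Rooted (G : SimpleGraph V) (Iv : V → Set V) (S : Set V) : Prop :=
  S.Nonempty ∧ Conn G S ∧
    ∃ m ∈ S, S ⊆ Iv m ∧ ∀ i ∈ S, ∀ j ∈ S, (i ∈ Iv j ↔ j ∈ interval G i m)

/-- `S̄ := {v ∈ S : I_v ⊄ S}`. -/
def bar (Iv : V → Set V) (S : Set V) : Set V := {v ∈ S | ¬ Iv v ⊆ S}

/-- `S` is weakly rooted: `S` is nonempty, connected, and either `S̄ = ∅` or `S̄` is a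
(nonempty) connected rooted set. -/
def WeaklyRooted (G : SimpleGraph V) (Iv : V → Set V) (S : Set V) : Prop :=
  S.Nonempty ∧ Conn G S ∧ (bar Iv S = ∅ ∨ Rooted G Iv (bar Iv S))

/-- Two (nonempty connected) subsets `I`, `J` are compatible if `I ⊆ J`, or `J ⊆ I`, or
they are disjoint and no edge of `G` joins a vertex of `I` to a vertex of `J`. -/
def Compatible (G : SimpleGraph V) (I J : Set V) : Prop :=
  I ⊆ J ∨ J ⊆ I ∨ (I ∩ J = ∅ ∧ ∀ a ∈ I, ∀ b ∈ J, ¬ G.Adj a b)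

end Paper

/-! If `v ≠ w` both touch `I` from outside, the tree path from `v` to `w` runs through a
neighbour `a ∈ I` of `v`. Then `a ∈ S`, and `a` lies on the path from `v` or from `w` to the
root `m`, so rootedness puts `v` or `w` into `I_a ⊆ I`. -/

namespace Paper

open SimpleGraph

variable {V : Type*} {G : SimpleGraph V}

lemma mem_interval_of_mem_support (hG : G.IsTree) {v w c : V} (p : G.Walk v w)
    (hp : p.IsPath) (hc : c ∈ p.support) : c ∈ interval G v w := by
  intro q hq
  rwa [(hG.existsUnique_path v w).unique hq hp]

lemma Conn.exists_path_support_subset {S : Set V} (hS : Conn G S) {v w : V}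
    (hv : v ∈ S) (hw : w ∈ S) : ∃ p : G.Walk v w, p.IsPath ∧ ∀ c ∈ p.support, c ∈ S := by
  classical
  obtain ⟨q⟩ := hS ⟨v, hv⟩ ⟨w, hw⟩
  let p := q.map (Embedding.induce S).toHom
  refine ⟨p.bypass, p.bypass_isPath, fun c hc => ?_⟩
  replace hc : c ∈ p.support := p.support_bypass_subset_support hc
  rw [Walk.support_map, List.mem_map] at hc
  obtain ⟨⟨x, hx⟩, -, rfl⟩ := hc
  exact hx

lemma Conn.interval_subset {S : Set V} (hS : Conn G S)
    {v w : V} (hv : v ∈ S) (hw : w ∈ S) : interval G v w ⊆ S := by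
  obtain ⟨p, hp, hpS⟩ := hS.exists_path_support_subset hv hw
  exact fun c hc => hpS c (hc p hp)

lemma interval_subset_union_interval (hG : G.IsTree) (v w m : V) :
    interval G v w ⊆ interval G v m ∪ interval G w m := by
  classical
  intro c hc
  obtain ⟨p, hp, -⟩ := hG.existsUnique_path v m
  obtain ⟨q, hq, -⟩ := hG.existsUnique_path w m
  have hc' : c ∈ (p.append q.reverse).support :=
    (p.append q.reverse).support_bypass_subset_support (hc _ (p.append q.reverse).bypass_isPath)
  rw [Walk.mem_support_append_iff, Walk.support_reverse, List.mem_reverse] at hc'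
  exact hc'.imp (mem_interval_of_mem_support hG p hp) (mem_interval_of_mem_support hG q hq)

lemma exists_adj_of_not_compatible_singleton {I : Set V} {x : V}
    (h : ¬ Compatible G I {x}) : x ∉ I ∧ ∃ a ∈ I, G.Adj a x := by
  have hxI : x ∉ I := fun hx => h (Or.inr (Or.inl (Set.singleton_subset_iff.mpr hx)))
  refine ⟨hxI, ?_⟩
  by_contra! hadj
  refine h (Or.inr (Or.inr ⟨?_, fun a ha b hb => hb ▸ hadj a ha⟩))
  rw [Set.inter_singleton_eq_empty]
  exact hxI

lemma mem_interval_of_adj_of_adj (hG : G.IsTree) {I : Set V} (hI : Conn G I)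
    {v w a b : V} (hvI : v ∉ I) (hwI : w ∉ I) (hvw : v ≠ w) (haI : a ∈ I) (hbI : b ∈ I)
    (hva : G.Adj v a) (hbw : G.Adj b w) : a ∈ interval G v w := by
  obtain ⟨Q, hQ, hQI⟩ := hI.exists_path_support_subset haI hbI
  have hQw : (Q.concat hbw).IsPath :=
    hQ.concat (fun h => hwI (hQI w h)) hbw
  have hvQw : v ∉ (Q.concat hbw).support := by
    rw [Walk.support_concat, List.mem_append, List.mem_singleton]
    rintro (h | h)
    exacts [hvI (hQI v h), hvw h]
  exact mem_interval_of_mem_support hG (.cons hva (Q.concat hbw)) (hQw.cons hvQw)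
    (by simp [Walk.support_concat])

end Paper

theorem statement_2_general {V : Type*} (G : SimpleGraph V) (hG : G.IsTree)
    (𝓘 : Set (Set V)) (h𝓘 : Paper.MaxNested G 𝓘)
    (Iv : V → Set V) (hIv : Paper.IsLeastContaining 𝓘 Iv)
    (S : Set V) (hS : Paper.Rooted G Iv S) :
    ∀ I ∈ 𝓘, ∀ v ∈ S, ∀ w ∈ S,
      ¬ Paper.Compatible G I {v} → ¬ Paper.Compatible G I {w} → v = w := by
  intro I hI v hv w hw hcv hcw
  by_contra hvw
  obtain ⟨hvI, a, haI, hav⟩ := Paper.exists_adj_of_not_compatible_singleton hcv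
  obtain ⟨hwI, b, hbI, hbw⟩ := Paper.exists_adj_of_not_compatible_singleton hcw
  obtain ⟨-, hSconn, m, -, -, hroot⟩ := hS
  have haVW : a ∈ Paper.interval G v w := Paper.mem_interval_of_adj_of_adj hG
    (h𝓘.1.1 I hI).2 hvI hwI hvw haI hbI hav.symm hbw
  have haS : a ∈ S := hSconn.interval_subset hv hw haVW
  have hIva : Iv a ⊆ I := (hIv a).2.2 I hI haI
  rcases Paper.interval_subset_union_interval hG v w m haVW with h | h
  · exact hvI (hIva ((hroot v hv a haS).mpr h))
  · exact hwI (hIva ((hroot w hw a haS).mpr h))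

/-- Let `𝓘` be a maximal nested collection on the vertex set `V` of a finite tree `Γ`,
and let `S ⊆ V` be a nonempty connected set that is rooted with respect to `𝓘`. Then for
every `I ∈ 𝓘` there is at most one vertex `v ∈ S` such that `I` and `{v}` are
incompatible. -/
theorem statement_2 {V : Type*} [Fintype V] (G : SimpleGraph V) (hG : G.IsTree)
    (𝓘 : Set (Set V)) (h𝓘 : Paper.MaxNested G 𝓘)
    (Iv : V → Set V) (hIv : Paper.IsLeastContaining 𝓘 Iv)
    (S : Set V) (hS : Paper.Rooted G Iv S) :
    ∀ I ∈ 𝓘, ∀ v ∈ S, ∀ w ∈ S,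
      ¬ Paper.Compatible G I {v} → ¬ Paper.Compatible G I {w} → v = w :=
  statement_2_general G hG 𝓘 h𝓘 Iv hIv S hS
end

section
/- Let 𝓘 be a maximal nested collection on the vertex set V of a finite tree Γ, and let S ⊆ V be a nonempty connected set that is weakly rooted with respect to 𝓘 and satisfies S ∉ 𝓘. Then for every I ∈ 𝓘: I and S are incompatible if and only if I is not a subset of S and I and S̄ are incompatible. -/
namespace Aux
open Paper

variable {V : Type*} {G : SimpleGraph V}

/-- Reachability is preserved under enlarging the induced set. -/
lemma reach_mono {S T : Set V} (hST : S ⊆ T) {u v : V} (hu : u ∈ S) (hv : v ∈ S)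
    (h : (G.induce S).Reachable ⟨u, hu⟩ ⟨v, hv⟩) :
    (G.induce T).Reachable ⟨u, hST hu⟩ ⟨v, hST hv⟩ :=
  h.map (SimpleGraph.induceHomOfLE G hST).toHom

lemma inter_empty_absurd {A B : Set V} (h : A ∩ B = ∅) {x : V}
    (hx : x ∈ A) (hy : x ∈ B) : False := by
  have : x ∈ A ∩ B := ⟨hx, hy⟩
  simp [h] at this

/-- Adding a vertex adjacent to a connected set keeps it connected. -/
lemma conn_insert {I : Set V} (hI : Paper.Conn G I) {a b : V} (ha : a ∈ I)
    (hadj : G.Adj a b) : Paper.Conn G (insert b I) := by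
  have hsub : I ⊆ insert b I := Set.subset_insert _ _
  have key : ∀ z : ↥(insert b I),
      (G.induce (insert b I)).Reachable z ⟨a, hsub ha⟩ := by
    rintro ⟨z, hz⟩
    rcases Set.mem_insert_iff.mp hz with hzb | hzI
    · have h2 : (G.induce (insert b I)).Adj ⟨z, hz⟩ ⟨a, hsub ha⟩ := by
        simpa [hzb] using hadj.symm
      exact h2.reachable
    · exact reach_mono hsub hzI ha (hI ⟨z, hzI⟩ ⟨a, ha⟩)
  intro x y
  exact (key x).trans (key y).symm

/-- Walk confinement: in a union of pairwise disjoint sets with no cross edges,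
a walk starting in a member stays there. -/
lemma walk_confine {𝓙 : Set (Set V)} {U : Set V} (hU : U ⊆ ⋃₀ 𝓙)
    (hne : ∀ A ∈ 𝓙, ∀ B ∈ 𝓙, A ≠ B → ∀ a ∈ A, ∀ b ∈ B, ¬ G.Adj a b)
    {A : Set V} (hA : A ∈ 𝓙) {u v : ↥U} (p : (G.induce U).Walk u v)
    (hu : (u : V) ∈ A) : (v : V) ∈ A := by
  induction p with
  | nil => exact hu
  | @cons x y z h p ih =>
    apply ih
    have hadj : G.Adj (x : V) (y : V) := by simpa using h
    obtain ⟨B, hB, hyB⟩ := hU y.2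
    by_cases hAB : A = B
    · exact hAB ▸ hyB
    · exact absurd hadj (hne A hA B hB hAB _ hu _ hyB)

/-- Boundary edge: a connected set meeting `W` and its complement has an edge
crossing the boundary of `W` inside the set. -/
lemma boundary_aux {S W : Set V} {u v : ↥S} (p : (G.induce S).Walk u v) :
    (u : V) ∈ W → (v : V) ∉ W → ∃ x ∈ S ∩ W, ∃ y ∈ S \ W, G.Adj x y := by
  induction p with
  | nil => intro h1 h2; exact absurd h1 h2
  | @cons x y z h p ih =>
    intro h1 h2
    by_cases hy : (y : V) ∈ W
    · exact ih hy h2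
    · exact ⟨x, ⟨x.2, h1⟩, y, ⟨y.2, hy⟩, by simpa using h⟩

lemma boundary {S W : Set V} (hS : Paper.Conn G S) {a b : V} (ha : a ∈ S) (hb : b ∈ S)
    (haW : a ∈ W) (hbW : b ∉ W) :
    ∃ x ∈ S ∩ W, ∃ y ∈ S \ W, G.Adj x y := by
  obtain ⟨p⟩ := hS ⟨a, ha⟩ ⟨b, hb⟩
  exact boundary_aux p haW hbW

/-- Components of a disjoint union with no cross edges are exactly the members. -/
lemma comps {𝓙 : Set (Set V)}
    (hnec : ∀ A ∈ 𝓙, A.Nonempty ∧ Paper.Conn G A)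
    (hne : ∀ A ∈ 𝓙, ∀ B ∈ 𝓙, A ≠ B → ∀ a ∈ A, ∀ b ∈ B, ¬ G.Adj a b)
    (C : Set V) : Paper.IsCompOf G C (⋃₀ 𝓙) ↔ C ∈ 𝓙 := by
  constructor
  · rintro ⟨⟨c, hc⟩, hsub, hconn, hmax⟩
    obtain ⟨A, hA, hcA⟩ := hsub hc
    have hCA : C ⊆ A := by
      intro d hd
      obtain ⟨p⟩ := hconn ⟨c, hc⟩ ⟨d, hd⟩
      exact walk_confine hsub hne hA p hcA
    have := hmax A hCA (Set.subset_sUnion_of_mem hA) (hnec A hA).2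
    exact this ▸ hA
  · intro hC
    refine ⟨(hnec C hC).1, Set.subset_sUnion_of_mem hC, (hnec C hC).2, ?_⟩
    intro D hCD hDU hD
    refine Set.Subset.antisymm ?_ hCD
    intro d hd
    obtain ⟨a, haC⟩ := (hnec C hC).1
    obtain ⟨p⟩ := hD ⟨a, hCD haC⟩ ⟨d, hd⟩
    exact walk_confine hDU hne hC p haC

/-- Two disjoint members of a nested collection are joined by no edge. -/
lemma no_edge_disjoint {𝓘 : Set (Set V)} (hN : Paper.Nested G 𝓘)
    {I J : Set V} (hI : I ∈ 𝓘) (hJ : J ∈ 𝓘) (hd : I ∩ J = ∅)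
    {a b : V} (ha : a ∈ I) (hb : b ∈ J) : ¬ G.Adj a b := by
  intro hadj
  by_cases hIJ : I = J
  · exact inter_empty_absurd hd ha (hIJ ▸ ha)
  · have hpair : ({I, J} : Set (Set V)) ⊆ 𝓘 := by
      intro X hX; rcases hX with h | h <;> simp_all
    have hpw : ({I, J} : Set (Set V)).Pairwise fun A B => A ∩ B = ∅ := by
      intro X hX Y hY hXY
      rcases hX with rfl | hX <;> rcases hY with rfl | hY <;>
        simp_all [Set.inter_comm]
    have hJcomp : Paper.IsCompOf G J (⋃₀ {I, J}) := (hN.2.2 {I, J} hpair hpw J).mpr (by simp)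
    have hJconn := (hN.1 J hJ).2
    have hDconn : Paper.Conn G (insert a J) := conn_insert hJconn hb hadj.symm
    have hDsub : insert a J ⊆ ⋃₀ {I, J} := by
      intro x hx
      rcases hx with rfl | hx
      · exact ⟨I, by simp, ha⟩
      · exact ⟨J, by simp, hx⟩
    have := hJcomp.2.2.2 (insert a J) (Set.subset_insert _ _) hDsub hDconn
    have haJ : a ∈ J := this ▸ Set.mem_insert _ _
    exact inter_empty_absurd hd ha haJ

/-- Any two members of a nested collection are compatible. -/
lemma mem_compat {𝓘 : Set (Set V)} (hN : Paper.Nested G 𝓘)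
    {I J : Set V} (hI : I ∈ 𝓘) (hJ : J ∈ 𝓘) :
    I ⊆ J ∨ J ⊆ I ∨ (I ∩ J = ∅ ∧ ∀ a ∈ I, ∀ b ∈ J, ¬ G.Adj a b) := by
  rcases hN.2.1 I hI J hJ with h | h | h
  · exact Or.inl h
  · exact Or.inr (Or.inl h)
  · exact Or.inr (Or.inr ⟨h, fun a ha b hb => no_edge_disjoint hN hI hJ h ha hb⟩)

/-- If `S̄ = ∅` (every `I_v`, `v ∈ S`, lies in `S`) then `S` belongs to the
maximal nested collection. -/
lemma mem_of_bar_empty {𝓘 : Set (Set V)} (h𝓘 : Paper.MaxNested G 𝓘)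
    {Iv : V → Set V} (hIv : Paper.IsLeastContaining 𝓘 Iv)
    {S : Set V} (hSne : S.Nonempty) (hSconn : Paper.Conn G S)
    (hbar : ∀ v ∈ S, Iv v ⊆ S) : S ∈ 𝓘 := by
  by_cases hmem : S ∈ 𝓘
  · exact hmem
  obtain ⟨hN, hcov, hmax⟩ := h𝓘
  -- S is compatible with every member of 𝓘
  have compatS : ∀ J ∈ 𝓘, S ⊆ J ∨ J ⊆ S ∨
      (S ∩ J = ∅ ∧ ∀ a ∈ S, ∀ b ∈ J, ¬ G.Adj a b) := by
    intro J hJ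
    by_cases hSJ : S ⊆ J
    · exact Or.inl hSJ
    by_cases hJS : J ⊆ S
    · exact Or.inr (Or.inl hJS)
    refine Or.inr (Or.inr ?_)
    by_cases hint : (S ∩ J).Nonempty
    · exfalso
      obtain ⟨v, hvS, hvJ⟩ := hint
      obtain ⟨w, hwS, hwJ⟩ := Set.not_subset.mp hSJ
      obtain ⟨x, ⟨hxS, hxJ⟩, y, ⟨hyS, hyJ⟩, hadj⟩ := boundary hSconn hvS hwS hvJ hwJ
      have hIy : Iv y ⊆ S := hbar y hyS
      rcases mem_compat hN (hIv y).1 hJ with h | h | h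
      · exact hyJ (h (hIv y).2.1)
      · exact hJS (h.trans hIy)
      · exact h.2 y (hIv y).2.1 x hxJ hadj.symm
    · have hdisj : S ∩ J = ∅ := Set.not_nonempty_iff_eq_empty.mp hint
      refine ⟨hdisj, ?_⟩
      intro a ha b hb hadj
      have hIa : Iv a ⊆ S := hbar a ha
      rcases mem_compat hN (hIv a).1 hJ with h | h | h
      · exact inter_empty_absurd hdisj ha (h (hIv a).2.1)
      · obtain ⟨j, hj⟩ := (hN.1 J hJ).1
        exact inter_empty_absurd hdisj (hIa (h hj)) hj
      · exact h.2 a (hIv a).2.1 b hb hadj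
  -- 𝓘 ∪ {S} is nested
  have hmemcase : ∀ A ∈ insert S 𝓘, A = S ∨ A ∈ 𝓘 := fun A hA => hA
  have hnec' : ∀ A ∈ insert S 𝓘, A.Nonempty ∧ Paper.Conn G A := by
    intro A hA
    rcases hA with rfl | hA
    · exact ⟨hSne, hSconn⟩
    · exact hN.1 A hA
  have hnested : Paper.Nested G (insert S 𝓘) := by
    refine ⟨hnec', ?_, ?_⟩
    · intro A hA B hB
      rcases hA with rfl | hA <;> rcases hB with rfl | hB
      · exact Or.inl subset_rfl
      · rcases compatS B hB with h | h | h
        · exact Or.inl h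
        · exact Or.inr (Or.inl h)
        · exact Or.inr (Or.inr h.1)
      · rcases compatS A hA with h | h | h
        · exact Or.inr (Or.inl h)
        · exact Or.inl h
        · exact Or.inr (Or.inr (by rw [Set.inter_comm]; exact h.1))
      · exact hN.2.1 A hA B hB
    · intro 𝓙 h𝓙 hpw C
      apply comps
      · intro A hA
        exact hnec' A (h𝓙 hA)
      · intro A hA B hB hAB a ha b hb hadj
        have hd : A ∩ B = ∅ := hpw hA hB hAB
        rcases hmemcase A (h𝓙 hA) with rfl | hA' <;>
          rcases hmemcase B (h𝓙 hB) with rfl | hB'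
        · exact hAB rfl
        · rcases compatS B hB' with h | h | h
          · exact inter_empty_absurd hd ha (h ha)
          · obtain ⟨x, hx⟩ := (hN.1 B hB').1
            exact inter_empty_absurd hd (h hx) hx
          · exact h.2 a ha b hb hadj
        · rcases compatS A hA' with h | h | h
          · exact inter_empty_absurd hd (h hb) hb
          · obtain ⟨x, hx⟩ := (hN.1 A hA').1
            exact inter_empty_absurd hd hx (h hx)
          · exact h.2 b hb a ha hadj.symm
        · exact no_edge_disjoint hN hA' hB' hd ha hb hadj
  have := hmax (insert S 𝓘) hnested (Set.subset_insert _ _)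
  exact this ▸ Set.mem_insert _ _

end Aux

/-- Let `𝓘` be a maximal nested collection on the vertex set `V` of a finite tree, and
let `S` be a nonempty connected set that is weakly rooted with respect to `𝓘` and
satisfies `S ∉ 𝓘`. Then for every `I ∈ 𝓘`: `I` and `S` are incompatible iff `I` is not a
subset of `S` and `I` and `S̄` are incompatible. -/
theorem statement_3 {V : Type*} [Fintype V] (G : SimpleGraph V) (hG : G.IsTree)
    (𝓘 : Set (Set V)) (h𝓘 : Paper.MaxNested G 𝓘)
    (Iv : V → Set V) (hIv : Paper.IsLeastContaining 𝓘 Iv)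
    (S : Set V) (hS : Paper.WeaklyRooted G Iv S) (hSnot : S ∉ 𝓘) :
    ∀ I ∈ 𝓘, (¬ Paper.Compatible G I S ↔
      (¬ I ⊆ S ∧ ¬ Paper.Compatible G I (Paper.bar Iv S))) := by

  obtain ⟨hSne, hSconn, _⟩ := hS
  have hbar_sub : Paper.bar Iv S ⊆ S := fun v hv => hv.1
  -- S̄ is nonempty
  have hbar_ne : (Paper.bar Iv S).Nonempty := by
    by_contra h
    have hempty : ∀ v ∈ S, Iv v ⊆ S := by
      intro v hv
      by_contra hns
      exact h ⟨v, hv, hns⟩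
    exact hSnot (Aux.mem_of_bar_empty h𝓘 hIv hSne hSconn hempty)
  intro I hI
  have hN := h𝓘.1
  constructor
  · intro hinc
    have hIS : ¬ I ⊆ S := fun h => hinc (Or.inl h)
    have hSI : ¬ S ⊆ I := fun h => hinc (Or.inr (Or.inl h))
    have hrest : ¬ (I ∩ S = ∅ ∧ ∀ a ∈ I, ∀ b ∈ S, ¬ G.Adj a b) :=
      fun h => hinc (Or.inr (Or.inr h))
    refine ⟨hIS, ?_⟩
    rintro (h | h | ⟨hdisj, hnoe⟩)
    · exact hIS (h.trans hbar_sub)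
    · -- S̄ ⊆ I
      obtain ⟨s, hsS, _⟩ := hbar_ne
      have hsI : s ∈ I := h ⟨hsS, ‹_›⟩
      obtain ⟨w, hwS, hwI⟩ := Set.not_subset.mp hSI
      obtain ⟨x, ⟨hxS, hxI⟩, y, ⟨hyS, hyI⟩, hadj⟩ :=
        Aux.boundary hSconn hsS hwS hsI hwI
      have hynbar : y ∉ Paper.bar Iv S := fun hy => hyI (h hy)
      have hIy : Iv y ⊆ S := by
        by_contra hns
        exact hynbar ⟨hyS, hns⟩
      rcases Aux.mem_compat hN (hIv y).1 hI with hc | hc | hc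
      · exact hyI (hc (hIv y).2.1)
      · exact hIS (hc.trans hIy)
      · exact hc.2 y (hIv y).2.1 x hxI hadj.symm
    · -- I ∩ S̄ = ∅ and no edge between I and S̄
      by_cases hint : (I ∩ S).Nonempty
      · obtain ⟨v, hvI, hvS⟩ := hint
        obtain ⟨w, hwS, hwI⟩ := Set.not_subset.mp hSI
        obtain ⟨x, ⟨hxS, hxI⟩, y, ⟨hyS, hyI⟩, hadj⟩ :=
          Aux.boundary hSconn hvS hwS hvI hwI
        by_cases hybar : y ∈ Paper.bar Iv S
        · exact hnoe x hxI y hybar hadj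
        · have hIy : Iv y ⊆ S := by
            by_contra hns
            exact hybar ⟨hyS, hns⟩
          rcases Aux.mem_compat hN (hIv y).1 hI with hc | hc | hc
          · exact hyI (hc (hIv y).2.1)
          · exact hIS (hc.trans hIy)
          · exact hc.2 y (hIv y).2.1 x hxI hadj.symm
      · have hISdisj : I ∩ S = ∅ := Set.not_nonempty_iff_eq_empty.mp hint
        have hedge : ¬ ∀ a ∈ I, ∀ b ∈ S, ¬ G.Adj a b := fun h => hrest ⟨hISdisj, h⟩
        push_neg at hedge
        obtain ⟨a, haI, b, hbS, hadj⟩ := hedge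
        by_cases hbbar : b ∈ Paper.bar Iv S
        · exact hnoe a haI b hbbar hadj
        · have hIb : Iv b ⊆ S := by
            by_contra hns
            exact hbbar ⟨hbS, hns⟩
          rcases Aux.mem_compat hN hI (hIv b).1 with hc | hc | hc
          · exact Aux.inter_empty_absurd hISdisj haI (hIb (hc haI))
          · exact Aux.inter_empty_absurd hISdisj (hc (hIv b).2.1) hbS
          · exact hc.2 a haI b (hIv b).2.1 hadj
  · rintro ⟨hIS, hincbar⟩ (h | h | ⟨hdisj, hnoe⟩)
    · exact hIS h
    · exact hincbar (Or.inr (Or.inl (hbar_sub.trans h)))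
    · refine hincbar (Or.inr (Or.inr ⟨?_, ?_⟩))
      · apply Set.eq_empty_of_subset_empty
        rw [← hdisj]
        exact Set.inter_subset_inter_right _ hbar_sub
      · intro a ha b hb
        exact hnoe a ha b (hbar_sub hb)
end

section
/- Let 𝓘 be a maximal nested collection on the vertex set V of a finite tree Γ, let S ⊆ V be nonempty and connected, and let I ∈ 𝓘 with I not a subset of S. Then I and S are incompatible if and only if there exists a vertex v ∈ S such that I and {v} are incompatible. -/
lemma exit_edge {V : Type*} (G : SimpleGraph V) (S I : Set V) {x y : S}
    (w : (G.induce S).Walk x y) (hx : (x : V) ∈ I) (hy : (y : V) ∉ I) :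
    ∃ a ∈ I, ∃ b ∈ S, b ∉ I ∧ G.Adj a b := by
  induction w with
  | nil => exact absurd hx hy
  | @cons u m v h p ih =>
    by_cases hm : (m : V) ∈ I
    · exact ih hm hy
    · exact ⟨u, hx, m, m.2, hm, h⟩


/-- Let `𝓘` be a maximal nested collection on the vertex set `V` of a finite tree, let
`S ⊆ V` be nonempty and connected, and let `I ∈ 𝓘` with `I` not a subset of `S`. Then
`I` and `S` are incompatible iff there exists a vertex `v ∈ S` such that `I` and `{v}`
are incompatible. -/
theorem statement_4 {V : Type*} [Fintype V] (G : SimpleGraph V) (hG : G.IsTree)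
    (𝓘 : Set (Set V)) (h𝓘 : Paper.MaxNested G 𝓘)
    (S : Set V) (hS1 : S.Nonempty) (hS2 : Paper.Conn G S)
    (I : Set V) (hI : I ∈ 𝓘) (hIS : ¬ I ⊆ S) :
    ¬ Paper.Compatible G I S ↔ ∃ v ∈ S, ¬ Paper.Compatible G I {v} := by
  have hIne : I.Nonempty := ((h𝓘.1.1 I hI).1)
  constructor
  · intro hinc
    rw [Paper.Compatible] at hinc
    push_neg at hinc
    obtain ⟨-, hSI, hdis⟩ := hinc
    have key : ∃ a ∈ I, ∃ b ∈ S, b ∉ I ∧ G.Adj a b := by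
      by_cases hdisj : I ∩ S = ∅
      · obtain ⟨a, ha, b, hb, hab⟩ := hdis hdisj
        refine ⟨a, ha, b, hb, ?_, hab⟩
        intro hbI
        exact absurd (Set.mem_inter hbI hb) (by rw [hdisj]; exact id)
      · obtain ⟨x, hxI, hxS⟩ := Set.nonempty_iff_ne_empty.mpr hdisj
        obtain ⟨v, hvS, hvI⟩ := Set.not_subset.mp hSI
        obtain ⟨w⟩ := hS2 ⟨x, hxS⟩ ⟨v, hvS⟩
        exact exit_edge G S I w hxI hvI
    obtain ⟨a, ha, b, hbS, hbI, hab⟩ := key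
    refine ⟨b, hbS, ?_⟩
    rw [Paper.Compatible]
    push_neg
    refine ⟨?_, ?_, ?_⟩
    · intro hsub
      obtain ⟨c, hc⟩ := hIne
      have : c = b := hsub hc
      exact hbI (this ▸ hc)
    · intro hsub
      exact hbI (hsub rfl)
    · intro _
      exact ⟨a, ha, b, rfl, hab⟩
  · rintro ⟨v, hvS, hv⟩
    rw [Paper.Compatible] at hv ⊢
    push_neg at hv ⊢
    obtain ⟨h1, h2, h3⟩ := hv
    have hvI : v ∉ I := fun h => h2 (fun x hx => hx ▸ h)
    obtain ⟨a, ha, b, hb, hab⟩ := h3 (by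
      ext x; simp only [Set.mem_inter_iff, Set.mem_singleton_iff, Set.mem_empty_iff_false,
        iff_false, not_and]
      rintro hxI rfl; exact hvI hxI)
    have hb' : b = v := hb
    refine ⟨hIS, fun hsub => hvI (hsub hvS), fun _ => ⟨a, ha, v, hvS, hb' ▸ hab⟩⟩
end

section
/- Let Γ be a finite tree with vertex set V, and let S, T ⊆ V be disjoint nonempty connected subsets such that some edge of Γ joins a vertex w ∈ S to a vertex v ∈ T. Then the family consisting of S, S ∪ T, the connected components of S ∖ {w}, and the connected components of T ∖ {v} is a nested collection. -/
section Helpers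

open Paper SimpleGraph

variable {V : Type*} {G : SimpleGraph V}

private lemma reach_lift {A B : Set V} (h : A ⊆ B) {x y : V} (hx : x ∈ A) (hy : y ∈ A)
    (hr : (G.induce A).Reachable ⟨x, hx⟩ ⟨y, hy⟩) :
    (G.induce B).Reachable ⟨x, h hx⟩ ⟨y, h hy⟩ :=
  hr.map (⟨fun a => ⟨a.1, h a.2⟩, fun ha => ha⟩ : G.induce A →g G.induce B)

private lemma conn_union {A B : Set V} (hA : Conn G A) (hB : Conn G B) {a b : V}
    (ha : a ∈ A) (hb : b ∈ B)
    (hr : (G.induce (A ∪ B)).Reachable ⟨a, Or.inl ha⟩ ⟨b, Or.inr hb⟩) :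
    Conn G (A ∪ B) := by
  have key : ∀ x : ↑(A ∪ B), (G.induce (A ∪ B)).Reachable x ⟨a, Or.inl ha⟩ := by
    rintro ⟨x, hx | hx⟩
    · exact reach_lift Set.subset_union_left hx ha (hA ⟨x, hx⟩ ⟨a, ha⟩)
    · exact (reach_lift Set.subset_union_right hx hb (hB ⟨x, hx⟩ ⟨b, hb⟩)).trans hr.symm
  intro x y
  exact (key x).trans (key y).symm

private lemma conn_union_point {A B : Set V} (hA : Conn G A) (hB : Conn G B) {x : V}
    (hxA : x ∈ A) (hxB : x ∈ B) : Conn G (A ∪ B) :=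
  conn_union hA hB hxA hxB (by exact Reachable.refl _)

private lemma conn_union_adj {A B : Set V} (hA : Conn G A) (hB : Conn G B) {a b : V}
    (ha : a ∈ A) (hb : b ∈ B) (hab : G.Adj a b) : Conn G (A ∪ B) :=
  conn_union hA hB ha hb (Adj.reachable (by exact hab))

private lemma comp_union_eq_left {U C D : Set V} (hC : IsCompOf G C U) (hD : D ⊆ U)
    (hconn : Conn G (C ∪ D)) : C ∪ D = C :=
  hC.2.2.2 (C ∪ D) Set.subset_union_left (Set.union_subset hC.2.1 hD) hconn

private lemma comp_eq_or_disjoint {C D U : Set V} (hC : IsCompOf G C U) (hD : IsCompOf G D U) :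
    C = D ∨ C ∩ D = ∅ := by
  by_cases h : (C ∩ D).Nonempty
  · left
    obtain ⟨x, hxC, hxD⟩ := h
    have hcon : Conn G (C ∪ D) := conn_union_point hC.2.2.1 hD.2.2.1 hxC hxD
    have h1 : C ∪ D = C := comp_union_eq_left hC hD.2.1 hcon
    have h2 : C ∪ D = D := by
      rw [Set.union_comm] at hcon ⊢
      exact comp_union_eq_left hD hC.2.1 hcon
    exact h1.symm.trans h2
  · right; exact Set.not_nonempty_iff_eq_empty.mp h

private lemma comp_no_edge {U : Set V} {C D : Set V} (hC : IsCompOf G C U)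
    (hD : IsCompOf G D U) (hCD : C ≠ D) {a b : V} (ha : a ∈ C) (hb : b ∈ D) :
    ¬ G.Adj a b := by
  intro hab
  have hcon : Conn G (C ∪ D) := conn_union_adj hC.2.2.1 hD.2.2.1 ha hb hab
  have h1 : C ∪ D = C := comp_union_eq_left hC hD.2.1 hcon
  have h2 : C ∪ D = D := by
    rw [Set.union_comm] at hcon ⊢
    exact comp_union_eq_left hD hC.2.1 hcon
  exact hCD (h1.symm.trans h2)

private lemma no_escape (𝓙 : Set (Set V))
    (hne : ∀ J ∈ 𝓙, ∀ K ∈ 𝓙, J ≠ K → ∀ a ∈ J, ∀ b ∈ K, ¬ G.Adj a b)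
    {J : Set V} (hJ : J ∈ 𝓙) :
    ∀ {x y : ↑(⋃₀ 𝓙)} (_ : (G.induce (⋃₀ 𝓙)).Walk x y), (x : V) ∈ J → (y : V) ∈ J := by
  intro x y p
  induction p with
  | nil => exact id
  | @cons x z y h q ih =>
    intro hx
    obtain ⟨K, hK, hzK⟩ := z.2
    by_cases hKJ : K = J
    · exact ih (hKJ ▸ hzK)
    · exact absurd (show G.Adj (x : V) (z : V) from h)
        (hne J hJ K hK (Ne.symm hKJ) _ hx _ hzK)

private lemma member_max (𝓙 : Set (Set V))
    (hne : ∀ J ∈ 𝓙, ∀ K ∈ 𝓙, J ≠ K → ∀ a ∈ J, ∀ b ∈ K, ¬ G.Adj a b)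
    {J : Set V} (hJ : J ∈ 𝓙) (hJne : J.Nonempty) :
    ∀ D : Set V, J ⊆ D → D ⊆ ⋃₀ 𝓙 → Conn G D → D = J := by
  intro D hJD hDU hDconn
  refine Set.Subset.antisymm ?_ hJD
  intro y hy
  obtain ⟨j, hj⟩ := hJne
  obtain ⟨p⟩ := reach_lift hDU (hJD hj) hy (hDconn ⟨j, hJD hj⟩ ⟨y, hy⟩)
  exact no_escape 𝓙 hne hJ p hj

private lemma comp_family (𝓙 : Set (Set V))
    (hmem : ∀ J ∈ 𝓙, J.Nonempty ∧ Conn G J)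
    (hne : ∀ J ∈ 𝓙, ∀ K ∈ 𝓙, J ≠ K → ∀ a ∈ J, ∀ b ∈ K, ¬ G.Adj a b) :
    ∀ C : Set V, IsCompOf G C (⋃₀ 𝓙) ↔ C ∈ 𝓙 := by
  intro C
  constructor
  · rintro ⟨⟨x, hxC⟩, hCsub, hCconn, hCmax⟩
    obtain ⟨J, hJ, hxJ⟩ := hCsub hxC
    have hJU : J ⊆ ⋃₀ 𝓙 := Set.subset_sUnion_of_mem hJ
    have hCJ : Conn G (C ∪ J) := conn_union_point hCconn (hmem J hJ).2 hxC hxJ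
    have h1 : C ∪ J = C := hCmax _ Set.subset_union_left (Set.union_subset hCsub hJU) hCJ
    have hJC : J ⊆ C := Set.subset_union_right.trans h1.subset
    have := member_max 𝓙 hne hJ (hmem J hJ).1 C hJC hCsub hCconn
    exact this ▸ hJ
  · intro hJ
    exact ⟨(hmem _ hJ).1, Set.subset_sUnion_of_mem hJ, (hmem _ hJ).2,
      member_max 𝓙 hne hJ (hmem _ hJ).1⟩

private lemma exists_path_subset {A : Set V} (hA : Conn G A) {a b : V}
    (ha : a ∈ A) (hb : b ∈ A) :
    ∃ p : G.Walk a b, p.IsPath ∧ ∀ u ∈ p.support, u ∈ A := by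
  classical
  obtain ⟨p0⟩ := hA ⟨a, ha⟩ ⟨b, hb⟩
  let f : G.induce A →g G := ⟨Subtype.val, fun h => h⟩
  let p : G.Walk a b := p0.map f
  refine ⟨p.bypass, p.bypass_isPath, ?_⟩
  intro u hu
  have h1 := p.support_bypass_subset hu
  rw [Walk.support_map] at h1
  obtain ⟨⟨u', hu'⟩, _, rfl⟩ := List.mem_map.mp h1
  exact hu'

/-- In a tree, the only edge between two disjoint connected sets joined by the edge
`w v` is the edge `w v` itself. -/
private lemma only_edge (hG : G.IsTree) {S T : Set V} (hST : Disjoint S T)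
    (hS2 : Conn G S) (hT2 : Conn G T) {w v : V} (hw : w ∈ S) (hv : v ∈ T)
    (hadj : G.Adj w v) {a b : V} (ha : a ∈ S) (hb : b ∈ T) (hab : G.Adj a b) :
    a = w ∧ b = v := by
  classical
  obtain ⟨p, hp, hpS⟩ := exists_path_subset hS2 hw ha
  obtain ⟨q, hq, hqT⟩ := exists_path_subset hT2 hb hv
  set W : G.Walk w v := p.append (Walk.cons hab q) with hWdef
  have hWsupp : W.support = p.support ++ q.support := by
    simp [hWdef, Walk.support_append]
  have hWpath : W.IsPath := by
    rw [Walk.isPath_def, hWsupp]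
    refine List.Nodup.append hp.support_nodup hq.support_nodup ?_
    intro u hu1 hu2
    exact Set.disjoint_left.mp hST (hpS u hu1) (hqT u hu2)
  have hW' : (Walk.cons hadj Walk.nil : G.Walk w v).IsPath := by
    rw [Walk.isPath_def]
    simp [hadj.ne]
  obtain ⟨P, _, hPuniq⟩ := hG.existsUnique_path w v
  have hEq : W = Walk.cons hadj Walk.nil := (hPuniq W hWpath).trans (hPuniq _ hW').symm
  have hsuppEq : p.support ++ q.support = [w, v] := by
    rw [← hWsupp, hEq, Walk.support_cons, Walk.support_nil]
  have hlen : p.support.length + q.support.length = 2 := by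
    have := congrArg List.length hsuppEq
    simpa using this
  have hp1 : p.support.length = 1 ∧ q.support.length = 1 := by
    have h1 : p.support.length = p.length + 1 := Walk.length_support p
    have h2 : q.support.length = q.length + 1 := Walk.length_support q
    omega
  have hpsupp : p.support = [w] := by
    have := p.support_eq_cons
    rw [this]
    have : p.support.tail.length = 0 := by
      have := p.support_eq_cons
      rw [this] at hp1
      simpa using hp1.1
    rw [List.length_eq_zero_iff] at this
    rw [this]
  have hqsupp : q.support = [b] := by
    have := q.support_eq_cons
    rw [this]
    have : q.support.tail.length = 0 := by
      have := q.support_eq_cons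
      rw [this] at hp1
      simpa using hp1.2
    rw [List.length_eq_zero_iff] at this
    rw [this]
  constructor
  · have : a ∈ p.support := Walk.end_mem_support p
    rw [hpsupp, List.mem_singleton] at this
    exact this
  · have : v ∈ q.support := Walk.end_mem_support q
    rw [hqsupp, List.mem_singleton] at this
    exact this.symm

end Helpers

/-- Let `Γ` be a finite tree with vertex set `V`, and let `S, T ⊆ V` be disjoint
nonempty connected subsets such that some edge of `Γ` joins a vertex `w ∈ S` to a vertex
`v ∈ T`. Then the family consisting of `S`, `S ∪ T`, the connected components of
`S \ {w}`, and the connected components of `T \ {v}` is a nested collection. -/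


theorem statement_5 {V : Type*} [Fintype V] (G : SimpleGraph V) (hG : G.IsTree)
    (S T : Set V) (hST : Disjoint S T)
    (hS1 : S.Nonempty) (hS2 : Paper.Conn G S)
    (hT1 : T.Nonempty) (hT2 : Paper.Conn G T)
    (w v : V) (hw : w ∈ S) (hv : v ∈ T) (hadj : G.Adj w v) :
    Paper.Nested G (({S, S ∪ T} : Set (Set V)) ∪
      {C | Paper.IsCompOf G C (S \ {w})} ∪ {C | Paper.IsCompOf G C (T \ {v})}) := by
  classical
  have hSTe : S ∩ T = ∅ := Set.disjoint_iff_inter_eq_empty.mp hST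
  have hTSe : T ∩ S = ∅ := Set.disjoint_iff_inter_eq_empty.mp hST.symm
  have hSub : S ⊆ S ∪ T := Set.subset_union_left
  have hTub : T ⊆ S ∪ T := Set.subset_union_right
  have hcompS : ∀ C, Paper.IsCompOf G C (S \ {w}) → C ⊆ S := fun C hC =>
    hC.2.1.trans Set.diff_subset
  have hcompT : ∀ C, Paper.IsCompOf G C (T \ {v}) → C ⊆ T := fun C hC =>
    hC.2.1.trans Set.diff_subset
  have honly : ∀ a ∈ S, ∀ b ∈ T, G.Adj a b → a = w ∧ b = v := fun a ha b hb hab =>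
    only_edge hG hST hS2 hT2 hw hv hadj ha hb hab
  have hmeet : ∀ {J K : Set V} (x : V), x ∈ J → x ∈ K → J ∩ K = ∅ → False :=
    fun x hxJ hxK h => Set.eq_empty_iff_forall_notMem.mp h x ⟨hxJ, hxK⟩
  set 𝓘 : Set (Set V) := (({S, S ∪ T} : Set (Set V)) ∪
      {C | Paper.IsCompOf G C (S \ {w})} ∪ {C | Paper.IsCompOf G C (T \ {v})}) with h𝓘
  have hTypes : ∀ X ∈ 𝓘, X = S ∨ X = S ∪ T ∨
      Paper.IsCompOf G X (S \ {w}) ∨ Paper.IsCompOf G X (T \ {v}) := by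
    intro X hX
    rw [h𝓘] at hX
    simp only [Set.mem_union, Set.mem_insert_iff, Set.mem_singleton_iff,
      Set.mem_setOf_eq] at hX
    tauto
  have hNC : ∀ X ∈ 𝓘, X.Nonempty ∧ Paper.Conn G X := by
    intro X hX
    rcases hTypes X hX with rfl | rfl | h | h
    · exact ⟨hS1, hS2⟩
    · exact ⟨hS1.mono hSub, conn_union_adj hS2 hT2 hw hv hadj⟩
    · exact ⟨h.1, h.2.2.1⟩
    · exact ⟨h.1, h.2.2.1⟩
  refine ⟨hNC, ?_, ?_⟩
  · -- pairwise nested or disjoint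
    intro X hX Y hY
    rcases hTypes X hX with rfl | rfl | hx | hx <;>
      rcases hTypes Y hY with rfl | rfl | hy | hy
    · exact Or.inl subset_rfl
    · exact Or.inl hSub
    · exact Or.inr (Or.inl (hcompS _ hy))
    · exact Or.inr (Or.inr (Set.subset_empty_iff.mp
        ((Set.inter_subset_inter_right _ (hcompT _ hy)).trans hSTe.subset)))
    · exact Or.inr (Or.inl hSub)
    · exact Or.inl subset_rfl
    · exact Or.inr (Or.inl ((hcompS _ hy).trans hSub))
    · exact Or.inr (Or.inl ((hcompT _ hy).trans hTub))
    · exact Or.inl (hcompS _ hx)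
    · exact Or.inl ((hcompS _ hx).trans hSub)
    · rcases comp_eq_or_disjoint hx hy with h | h
      · exact Or.inl h.subset
      · exact Or.inr (Or.inr h)
    · exact Or.inr (Or.inr (Set.subset_empty_iff.mp
        ((Set.inter_subset_inter (hcompS _ hx) (hcompT _ hy)).trans hSTe.subset)))
    · exact Or.inr (Or.inr (Set.subset_empty_iff.mp
        ((Set.inter_subset_inter_left _ (hcompT _ hx)).trans hTSe.subset)))
    · exact Or.inl ((hcompT _ hx).trans hTub)
    · exact Or.inr (Or.inr (Set.subset_empty_iff.mp
        ((Set.inter_subset_inter (hcompT _ hx) (hcompS _ hy)).trans hTSe.subset)))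
    · rcases comp_eq_or_disjoint hx hy with h | h
      · exact Or.inl h.subset
      · exact Or.inr (Or.inr h)
  · -- components of disjoint unions
    intro 𝓙 h𝓙 hpair C
    refine comp_family 𝓙 (fun J hJ => hNC J (h𝓙 hJ)) ?_ C
    intro J hJm K hKm hJK a haJ b hbK hab
    have hdisj : J ∩ K = ∅ := hpair hJm hKm hJK
    rcases hTypes J (h𝓙 hJm) with rfl | rfl | hx | hx <;>
      rcases hTypes K (h𝓙 hKm) with rfl | rfl | hy | hy
    · exact hJK rfl
    · exact hmeet w hw (Or.inl hw) hdisj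
    · obtain ⟨x, hxK⟩ := hy.1
      exact hmeet x (hcompS _ hy hxK) hxK hdisj
    · have hbT : b ∈ T \ {v} := hy.2.1 hbK
      exact hbT.2 (honly a haJ b hbT.1 hab).2
    · exact hmeet w (Or.inl hw) hw hdisj
    · exact hJK rfl
    · obtain ⟨x, hxK⟩ := hy.1
      exact hmeet x (hSub (hcompS _ hy hxK)) hxK hdisj
    · obtain ⟨x, hxK⟩ := hy.1
      exact hmeet x (hTub (hcompT _ hy hxK)) hxK hdisj
    · obtain ⟨x, hxJ⟩ := hx.1
      exact hmeet x hxJ (hcompS _ hx hxJ) hdisj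
    · obtain ⟨x, hxJ⟩ := hx.1
      exact hmeet x hxJ (hSub (hcompS _ hx hxJ)) hdisj
    · exact comp_no_edge hx hy hJK haJ hbK hab
    · have haS : a ∈ S \ {w} := hx.2.1 haJ
      have hbT : b ∈ T \ {v} := hy.2.1 hbK
      exact haS.2 (honly a haS.1 b hbT.1 hab).1
    · have haT : a ∈ T \ {v} := hx.2.1 haJ
      exact haT.2 (honly b hbK a haT.1 hab.symm).2
    · obtain ⟨x, hxJ⟩ := hx.1
      exact hmeet x hxJ (hTub (hcompT _ hx hxJ)) hdisj
    · have haT : a ∈ T \ {v} := hx.2.1 haJ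
      have hbS : b ∈ S \ {w} := hy.2.1 hbK
      exact hbS.2 (honly b hbS.1 a haT.1 hab.symm).1
    · exact comp_no_edge hx hy hJK haJ hbK hab
end

section
/- Let 𝓘 be a maximal nested collection on the vertex set V of a finite tree Γ. Then for every v ∈ V the family {I ∈ 𝓘 : v ∈ I} is nonempty and totally ordered by inclusion, so it has a least element I_v; and the map v ↦ I_v is a bijection from V onto 𝓘. In particular |𝓘| = |V|. -/
namespace Paper

open Set

variable {V : Type*} {G : SimpleGraph V}

theorem conn_singleton (u : V) : Conn G {u} := SimpleGraph.Preconnected.of_subsingleton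

theorem Conn.union_of_adj {I J : Set V} (hI : Conn G I) (hJ : Conn G J) {a b : V} (ha : a ∈ I)
    (hb : b ∈ J) (hab : G.Adj a b) : Conn G (I ∪ J) :=
  (SimpleGraph.connected_induce_union hI hJ ha hb hab).preconnected

theorem Conn.subset_of_adj_closed {D P : Set V} (hD : Conn G D) {c : V} (hcD : c ∈ D)
    (hcP : c ∈ P) (hP : ∀ a ∈ D, ∀ b ∈ D, a ∈ P → G.Adj a b → b ∈ P) : D ⊆ P := by
  intro d hdD
  by_contra hdP
  obtain ⟨p⟩ := hD ⟨c, hcD⟩ ⟨d, hdD⟩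
  obtain ⟨e, -, he₁, he₂⟩ := p.exists_boundary_dart (Subtype.val ⁻¹' P) hcP hdP
  exact he₂ (hP _ e.fst.2 _ e.snd.2 he₁ e.adj)

theorem isCompOf_self {S : Set V} (hne : S.Nonempty) (hS : Conn G S) : IsCompOf G S S :=
  ⟨hne, subset_rfl, hS, fun _ hSD hDS _ => hDS.antisymm hSD⟩

theorem exists_conn_adj_closed_subset [Finite V] {S : Set V} {u : V} (hu : u ∈ S) :
    ∃ A ⊆ S, u ∈ A ∧ Conn G A ∧ ∀ a ∈ A, ∀ b ∈ S, G.Adj a b → b ∈ A := by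
  obtain ⟨A, huA, hA⟩ := Finite.exists_le_maximal (p := fun D => D ⊆ S ∧ Conn G D)
    (a := {u}) ⟨singleton_subset_iff.2 hu, conn_singleton u⟩
  refine ⟨A, hA.prop.1, huA rfl, hA.prop.2, fun a ha b hb hab => ?_⟩
  have hAb : A ∪ {b} ⊆ S ∧ Conn G (A ∪ {b}) :=
    ⟨union_subset hA.prop.1 (singleton_subset_iff.2 hb),
      hA.prop.2.union_of_adj (conn_singleton b) ha rfl hab⟩
  exact hA.le_of_ge hAb subset_union_left (Or.inr rfl)

theorem Compatible.symm {I J : Set V} (h : Compatible G I J) : Compatible G J I := by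
  rcases h with h | h | ⟨hIJ, hadj⟩
  · exact Or.inr (Or.inl h)
  · exact Or.inl h
  · exact Or.inr (Or.inr ⟨inter_comm I J ▸ hIJ, fun a ha b hb hab => hadj b hb a ha hab.symm⟩)

theorem isCompOf_sUnion_iff {𝓙 : Set (Set V)} (hconn : ∀ J ∈ 𝓙, J.Nonempty ∧ Conn G J)
    (hadj : 𝓙.Pairwise fun J K => ∀ a ∈ J, ∀ b ∈ K, ¬ G.Adj a b) (C : Set V) :
    IsCompOf G C (⋃₀ 𝓙) ↔ C ∈ 𝓙 := by
  have subset_of_meets : ∀ D, Conn G D → D ⊆ ⋃₀ 𝓙 → ∀ J ∈ 𝓙, ∀ c ∈ D, c ∈ J → D ⊆ J := by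
    intro D hD hDU J hJ c hcD hcJ
    refine hD.subset_of_adj_closed hcD hcJ fun a _ b hbD haJ hab => ?_
    obtain ⟨K, hK, hbK⟩ := hDU hbD
    by_contra hbJ
    exact hadj hJ hK (fun h => hbJ (h ▸ hbK)) a haJ b hbK hab
  constructor
  · rintro ⟨⟨c, hc⟩, hCU, hC, hCmax⟩
    obtain ⟨J, hJ, hcJ⟩ := hCU hc
    rw [← hCmax J (subset_of_meets C hC hCU J hJ c hc hcJ) (subset_sUnion_of_mem hJ)
      (hconn J hJ).2]
    exact hJ
  · intro hC
    obtain ⟨⟨c, hc⟩, hCc⟩ := hconn C hC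
    refine ⟨⟨c, hc⟩, subset_sUnion_of_mem hC, hCc, fun D hCD hDU hD => ?_⟩
    exact (subset_of_meets D hD hDU C hC c (hCD hc) hc).antisymm hCD

theorem Nested.not_adj_of_inter_eq_empty {𝓘 : Set (Set V)} (h : Nested G 𝓘) {I J : Set V}
    (hI : I ∈ 𝓘) (hJ : J ∈ 𝓘) (hIJ : I ∩ J = ∅) {a b : V} (ha : a ∈ I) (hb : b ∈ J) :
    ¬ G.Adj a b := by
  intro hab
  have hne : I ≠ J := by
    rintro rfl
    exact (eq_empty_iff_forall_notMem.mp hIJ) a ⟨ha, ha⟩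
  have hpair : ({I, J} : Set (Set V)).Pairwise fun A B => A ∩ B = ∅ :=
    pairwise_pair.2 fun _ => ⟨hIJ, inter_comm I J ▸ hIJ⟩
  have hcomp : IsCompOf G (I ∪ J) (⋃₀ {I, J}) := by
    rw [sUnion_pair]
    exact isCompOf_self ⟨a, Or.inl ha⟩ ((h.1 I hI).2.union_of_adj (h.1 J hJ).2 ha hb hab)
  rcases (h.2.2 {I, J} (pair_subset hI hJ) hpair (I ∪ J)).1 hcomp with hI' | hJ'
  · exact (eq_empty_iff_forall_notMem.mp hIJ) b ⟨hI' ▸ Or.inr hb, hb⟩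
  · exact (eq_empty_iff_forall_notMem.mp hIJ) a ⟨ha, hJ' ▸ Or.inl ha⟩

theorem nested_iff {𝓘 : Set (Set V)} :
    Nested G 𝓘 ↔ (∀ S ∈ 𝓘, S.Nonempty ∧ Conn G S) ∧ ∀ S ∈ 𝓘, ∀ T ∈ 𝓘, Compatible G S T := by
  refine ⟨fun h => ⟨h.1, fun S hS T hT => ?_⟩, fun ⟨hconn, hcompat⟩ => ⟨hconn, ?_, ?_⟩⟩
  · rcases h.2.1 S hS T hT with hST | hTS | hST
    · exact Or.inl hST
    · exact Or.inr (Or.inl hTS)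
    · exact Or.inr (Or.inr ⟨hST, fun a ha b hb => h.not_adj_of_inter_eq_empty hS hT hST ha hb⟩)
  · intro S hS T hT
    rcases hcompat S hS T hT with hST | hTS | ⟨hST, -⟩
    exacts [Or.inl hST, Or.inr (Or.inl hTS), Or.inr (Or.inr hST)]
  · intro 𝓙 h𝓙 hdisj
    refine isCompOf_sUnion_iff (fun J hJ => hconn J (h𝓙 hJ)) fun J hJ K hK hJK => ?_
    rcases hcompat J (h𝓙 hJ) K (h𝓙 hK) with hsub | hsub | ⟨-, hadj⟩
    · obtain ⟨c, hc⟩ := (hconn J (h𝓙 hJ)).1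
      exact absurd (hdisj hJ hK hJK) (nonempty_iff_ne_empty.1 ⟨c, hc, hsub hc⟩)
    · obtain ⟨c, hc⟩ := (hconn K (h𝓙 hK)).1
      exact absurd (hdisj hJ hK hJK) (nonempty_iff_ne_empty.1 ⟨c, hsub hc, hc⟩)
    · exact hadj

theorem Nested.insert {𝓘 : Set (Set V)} (h : Nested G 𝓘) {A : Set V} (hne : A.Nonempty)
    (hA : Conn G A) (hcompat : ∀ J ∈ 𝓘, Compatible G A J) : Nested G (insert A 𝓘) := by
  obtain ⟨hconn, hcompat𝓘⟩ := nested_iff.1 h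
  refine nested_iff.2 ⟨forall_mem_insert.2 ⟨⟨hne, hA⟩, hconn⟩, ?_⟩
  rintro S (rfl | hS) T (rfl | hT)
  exacts [Or.inl subset_rfl, hcompat T hT, (hcompat S hS).symm, hcompat𝓘 S hS T hT]

theorem Nested.isChain_mem {𝓘 : Set (Set V)} (h : Nested G 𝓘) (v : V) :
    IsChain (· ⊆ ·) {I | I ∈ 𝓘 ∧ v ∈ I} := by
  intro A hA B hB _
  rcases h.2.1 A hA.1 B hB.1 with hAB | hBA | hAB
  exacts [Or.inl hAB, Or.inr hBA, absurd hAB (nonempty_iff_ne_empty.1 ⟨v, hA.2, hB.2⟩)]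

theorem Nested.exists_least_mem [Finite V] {𝓘 : Set (Set V)} (h : Nested G 𝓘) {v : V}
    {I : Set V} (hI : I ∈ 𝓘) (hv : v ∈ I) :
    ∃ I₀ ∈ 𝓘, v ∈ I₀ ∧ ∀ J ∈ 𝓘, v ∈ J → I₀ ⊆ J := by
  obtain ⟨I₀, -, hI₀⟩ := Finite.exists_le_minimal (p := fun J => J ∈ 𝓘 ∧ v ∈ J) ⟨hI, hv⟩
  refine ⟨I₀, hI₀.prop.1, hI₀.prop.2, fun J hJ hvJ => ?_⟩
  rcases (h.isChain_mem v).total hI₀.prop ⟨hJ, hvJ⟩ with hI₀J | hJI₀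
  exacts [hI₀J, hI₀.le_of_le ⟨hJ, hvJ⟩ hJI₀]

theorem Nested.exists_mem_not_mem_of_ssubset [Finite V] {𝓘 : Set (Set V)} (h : Nested G 𝓘)
    {I : Set V} (hI : I ∈ 𝓘) : ∃ v ∈ I, ∀ J ∈ 𝓘, J ⊂ I → v ∉ J := by
  by_contra! hcovered
  let P : Set V → Prop := fun K => K ∈ 𝓘 ∧ K ⊂ I
  let 𝓒 := {C | Maximal P C}
  have h𝓒 : 𝓒 ⊆ 𝓘 := fun C (hC : Maximal P C) => hC.prop.1
  have hdisj : 𝓒.Pairwise fun A B => A ∩ B = ∅ := by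
    intro C (hC : Maximal P C) C' (hC' : Maximal P C') hCC'
    rcases h.2.1 C hC.prop.1 C' hC'.prop.1 with hsub | hsub | hdisj
    · exact absurd (hC.eq_of_ge hC'.prop hsub).symm hCC'
    · exact absurd (hC'.eq_of_ge hC.prop hsub) hCC'
    · exact hdisj
  have hcover : ⋃₀ 𝓒 = I := by
    refine (sUnion_subset fun C (hC : Maximal P C) => hC.prop.2.subset).antisymm fun v hv => ?_
    obtain ⟨J, hJ, hJI, hvJ⟩ := hcovered v hv
    obtain ⟨C, hJC, hC⟩ := Finite.exists_le_maximal (p := P) ⟨hJ, hJI⟩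
    exact ⟨C, hC, hJC hvJ⟩
  have hI𝓒 : Maximal P I := (h.2.2 𝓒 h𝓒 hdisj I).1 <| by
    rw [hcover]
    exact isCompOf_self (h.1 I hI).1 (h.1 I hI).2
  exact hI𝓒.prop.2.ne rfl

theorem Nested.surjOn_of_isLeastContaining [Finite V] {𝓘 : Set (Set V)} (h : Nested G 𝓘)
    {Iv : V → Set V} (hIv : IsLeastContaining 𝓘 Iv) : SurjOn Iv univ 𝓘 := by
  intro I hI
  obtain ⟨v, hvI, hv⟩ := h.exists_mem_not_mem_of_ssubset hI
  have hIvI : Iv v ⊆ I := (hIv v).2.2 I hI hvI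
  exact ⟨v, trivial, hIvI.eq_of_not_ssubset fun hlt => hv _ (hIv v).1 hlt (hIv v).2.1⟩

theorem Nested.compatible_of_adj_closed {𝓘 : Set (Set V)} (h : Nested G 𝓘) {I A : Set V}
    {v : V} (hI : I ∈ 𝓘) (hleast : ∀ J ∈ 𝓘, v ∈ J → I ⊆ J) (hAI : A ⊆ I \ {v})
    (hclosed : ∀ a ∈ A, ∀ b ∈ I \ {v}, G.Adj a b → b ∈ A) (J : Set V) (hJ : J ∈ 𝓘) :
    Compatible G A J := by
  rcases (nested_iff.1 h).2 I hI J hJ with hIJ | hJI | ⟨hIJ, hadj⟩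
  · exact Or.inl (hAI.trans (sdiff_subset.trans hIJ))
  · by_cases hvJ : v ∈ J
    · exact Or.inl (hAI.trans (sdiff_subset.trans (hleast J hJ hvJ)))
    have hJS : J ⊆ I \ {v} := fun b hb => ⟨hJI hb, fun hbv => hvJ (hbv ▸ hb)⟩
    rcases (J ∩ A).eq_empty_or_nonempty with hJA | ⟨c, hcJ, hcA⟩
    · exact Or.inr (Or.inr ⟨inter_comm A J ▸ hJA, fun a ha b hb hab =>
        (eq_empty_iff_forall_notMem.1 hJA) b ⟨hb, hclosed a ha b (hJS hb) hab⟩⟩)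
    · exact Or.inr (Or.inl ((h.1 J hJ).2.subset_of_adj_closed hcJ hcA
        fun a _ b hb haA hab => hclosed a haA b (hJS hb) hab))
  · refine Or.inr (Or.inr ⟨subset_empty_iff.1 ?_, fun a ha => hadj a (hAI ha).1⟩)
    exact hIJ ▸ inter_subset_inter_left J (hAI.trans sdiff_subset)

theorem MaxNested.injective_of_isLeastContaining [Finite V] {𝓘 : Set (Set V)}
    (h : MaxNested G 𝓘) {Iv : V → Set V} (hIv : IsLeastContaining 𝓘 Iv) :
    Function.Injective Iv := by
  intro u v huv
  by_contra hne
  obtain ⟨A, hAS, huA, hA, hclosed⟩ :=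
    exists_conn_adj_closed_subset (G := G) (show u ∈ Iv v \ {v} from ⟨huv ▸ (hIv u).2.1, hne⟩)
  have hnested : Nested G (insert A 𝓘) := h.1.insert ⟨u, huA⟩ hA
    (h.1.compatible_of_adj_closed (hIv v).1 (hIv v).2.2 hAS hclosed)
  have hA𝓘 : A ∈ 𝓘 := h.2.2 _ hnested (subset_insert A 𝓘) ▸ mem_insert A 𝓘
  exact (hAS ((hIv u).2.2 A hA𝓘 huA (huv ▸ (hIv v).2.1))).2 rfl

end Paper

theorem statement_6_general {V : Type*} [Fintype V] (G : SimpleGraph V)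
    (𝓘 : Set (Set V)) (h𝓘 : Paper.MaxNested G 𝓘) :
    (∀ v : V, {I | I ∈ 𝓘 ∧ v ∈ I}.Nonempty ∧
      IsChain (· ⊆ ·) {I | I ∈ 𝓘 ∧ v ∈ I} ∧
      ∃ I₀ ∈ 𝓘, v ∈ I₀ ∧ ∀ J ∈ 𝓘, v ∈ J → I₀ ⊆ J) ∧
    (∀ Iv : V → Set V, Paper.IsLeastContaining 𝓘 Iv →
      Set.BijOn Iv Set.univ 𝓘) ∧
    𝓘.ncard = Fintype.card V := by
  have hcover : ∀ v, ∃ I ∈ 𝓘, v ∈ I := fun v =>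
    Set.mem_sUnion.1 (h𝓘.2.1 ▸ Set.mem_univ v)
  have hleast (v : V) : ∃ I₀ ∈ 𝓘, v ∈ I₀ ∧ ∀ J ∈ 𝓘, v ∈ J → I₀ ⊆ J :=
    let ⟨_, hI, hv⟩ := hcover v
    h𝓘.1.exists_least_mem hI hv
  have hbij (Iv : V → Set V) (hIv : Paper.IsLeastContaining 𝓘 Iv) : Set.BijOn Iv Set.univ 𝓘 :=
    ⟨fun v _ => (hIv v).1, (h𝓘.injective_of_isLeastContaining hIv).injOn,
      h𝓘.1.surjOn_of_isLeastContaining hIv⟩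
  refine ⟨fun v => ⟨hcover v, h𝓘.1.isChain_mem v, hleast v⟩, hbij, ?_⟩
  choose Iv hIv using hleast
  have hIvbij := hbij Iv hIv
  rw [← hIvbij.image_eq, hIvbij.injOn.ncard_image, Set.ncard_univ, Nat.card_eq_fintype_card]

/-- Let `𝓘` be a maximal nested collection on the vertex set `V` of a finite tree. Then
for every `v ∈ V` the family `{I ∈ 𝓘 : v ∈ I}` is nonempty and totally ordered by
inclusion, so it has a least element `I_v`; and the map `v ↦ I_v` is a bijection from
`V` onto `𝓘`. In particular `|𝓘| = |V|`. -/
theorem statement_6 {V : Type*} [Fintype V] (G : SimpleGraph V) (hG : G.IsTree)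
    (𝓘 : Set (Set V)) (h𝓘 : Paper.MaxNested G 𝓘) :
    (∀ v : V, {I | I ∈ 𝓘 ∧ v ∈ I}.Nonempty ∧
      IsChain (· ⊆ ·) {I | I ∈ 𝓘 ∧ v ∈ I} ∧
      ∃ I₀ ∈ 𝓘, v ∈ I₀ ∧ ∀ J ∈ 𝓘, v ∈ J → I₀ ⊆ J) ∧
    (∀ Iv : V → Set V, Paper.IsLeastContaining 𝓘 Iv →
      Set.BijOn Iv Set.univ 𝓘) ∧
    𝓘.ncard = Fintype.card V :=
  statement_6_general G 𝓘 h𝓘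
end

section
/- Let 𝓘 be a maximal nested collection on the vertex set V of a finite tree Γ. If v and w are adjacent vertices of Γ, then v ∈ I_w or w ∈ I_v; that is, adjacent vertices are comparable in the order v ≤_𝓘 w defined by v ∈ I_w. -/
private lemma conn_union_aux {V : Type*} (G : SimpleGraph V) {S T : Set V} {v w : V}
    (hS : Paper.Conn G S) (hT : Paper.Conn G T) (hv : v ∈ S) (hw : w ∈ T)
    (hadj : G.Adj v w) : Paper.Conn G (S ∪ T) := by
  have hvw : (G.induce (S ∪ T)).Reachable ⟨v, Or.inl hv⟩ ⟨w, Or.inr hw⟩ :=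
    SimpleGraph.Adj.reachable hadj
  have reachS : ∀ (a : V) (ha : a ∈ S),
      (G.induce (S ∪ T)).Reachable ⟨a, Or.inl ha⟩ ⟨v, Or.inl hv⟩ := fun a ha =>
    by
      have h2 := (hS ⟨a, ha⟩ ⟨v, hv⟩).map
        (G.induceHomOfLE (Set.subset_union_left (s := S) (t := T))).toHom
      simp only [SimpleGraph.Embedding.coe_toHom, SimpleGraph.induceHomOfLE_apply,
        Set.inclusion_mk] at h2
      exact h2
  have reachT : ∀ (a : V) (ha : a ∈ T),
      (G.induce (S ∪ T)).Reachable ⟨a, Or.inr ha⟩ ⟨w, Or.inr hw⟩ := fun a ha =>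
    by
      have h2 := (hT ⟨a, ha⟩ ⟨w, hw⟩).map
        (G.induceHomOfLE (Set.subset_union_right (s := S) (t := T))).toHom
      simp only [SimpleGraph.Embedding.coe_toHom, SimpleGraph.induceHomOfLE_apply,
        Set.inclusion_mk] at h2
      exact h2
  intro a b
  obtain ⟨a, ha⟩ := a
  obtain ⟨b, hb⟩ := b
  rcases ha with ha | ha <;> rcases hb with hb | hb
  · exact (reachS a ha).trans (reachS b hb).symm
  · exact ((reachS a ha).trans hvw).trans (reachT b hb).symm
  · exact ((reachT a ha).trans hvw.symm).trans (reachS b hb).symm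
  · exact (reachT a ha).trans (reachT b hb).symm

/-- Let `𝓘` be a maximal nested collection on the vertex set `V` of a finite tree. If
`v` and `w` are adjacent vertices, then `v ∈ I_w` or `w ∈ I_v`; that is, adjacent
vertices are comparable in the order `v ≤ w ↔ v ∈ I_w`. -/
theorem statement_8 {V : Type*} [Fintype V] (G : SimpleGraph V) (hG : G.IsTree)
    (𝓘 : Set (Set V)) (h𝓘 : Paper.MaxNested G 𝓘)
    (Iv : V → Set V) (hIv : Paper.IsLeastContaining 𝓘 Iv) :
    ∀ v w : V, G.Adj v w → v ∈ Iv w ∨ w ∈ Iv v := by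
  intro v w hvw
  by_contra h
  push_neg at h
  obtain ⟨hv, hw⟩ := h
  obtain ⟨⟨hne, hnest, hcomp⟩, -, -⟩ := h𝓘
  obtain ⟨hvmem, hvIv, -⟩ := hIv v
  obtain ⟨hwmem, hwIw, -⟩ := hIv w
  have hdisj : Iv v ∩ Iv w = ∅ := by
    rcases hnest _ hvmem _ hwmem with h1 | h1 | h1
    · exact absurd (h1 hvIv) hv
    · exact absurd (h1 hwIw) hw
    · exact h1
  have hne' : Iv v ≠ Iv w := by
    intro heq
    exact hv (heq ▸ hvIv)
  have hsub : ({Iv v, Iv w} : Set (Set V)) ⊆ 𝓘 := by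
    intro X hX
    rcases hX with rfl | rfl
    · exact hvmem
    · exact hwmem
  have hpair : ({Iv v, Iv w} : Set (Set V)).Pairwise (fun A B => A ∩ B = ∅) := by
    intro A hA B hB hAB
    rcases hA with rfl | rfl <;> rcases hB with rfl | rfl
    · exact absurd rfl hAB
    · exact hdisj
    · rw [Set.inter_comm]; exact hdisj
    · exact absurd rfl hAB
  have hU : ⋃₀ ({Iv v, Iv w} : Set (Set V)) = Iv v ∪ Iv w := Set.sUnion_pair _ _
  have hconn : Paper.Conn G (Iv v ∪ Iv w) :=
    conn_union_aux G (hne _ hvmem).2 (hne _ hwmem).2 hvIv hwIw hvw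
  have hcompOf : Paper.IsCompOf G (Iv v ∪ Iv w) (⋃₀ ({Iv v, Iv w} : Set (Set V))) := by
    rw [hU]
    refine ⟨⟨v, Or.inl hvIv⟩, subset_rfl, hconn, fun D hCD hDU _ => subset_antisymm hDU hCD⟩
  have := (hcomp _ hsub hpair _).mp hcompOf
  rcases this with h1 | h1
  · exact hw (h1 ▸ (Or.inr hwIw : w ∈ Iv v ∪ Iv w))
  · exact hv (h1 ▸ (Or.inl hvIv : v ∈ Iv v ∪ Iv w))
end

section
/- Let 𝓘 be a maximal nested collection on the vertex set V of a finite tree Γ. Let v ∈ V and let a be a neighbor of v in Γ with a ∈ I_v. Then {I ∈ 𝓘 : a ∈ I and v ∉ I} = {I ∈ 𝓘 : I_a ⊆ I ⊊ I_v}, and this family is totally ordered by inclusion. -/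
/-- Let `𝓘` be a maximal nested collection on the vertex set `V` of a finite tree. Let
`v ∈ V` and let `a` be a neighbor of `v` with `a ∈ I_v`. Then
`{I ∈ 𝓘 : a ∈ I and v ∉ I} = {I ∈ 𝓘 : I_a ⊆ I ⊊ I_v}`, and this family is totally
ordered by inclusion. -/
theorem statement_13 {V : Type*} [Fintype V] (G : SimpleGraph V) (hG : G.IsTree)
    (𝓘 : Set (Set V)) (h𝓘 : Paper.MaxNested G 𝓘)
    (Iv : V → Set V) (hIv : Paper.IsLeastContaining 𝓘 Iv)
    (v a : V) (hadj : G.Adj v a) (ha : a ∈ Iv v) :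
    {I | I ∈ 𝓘 ∧ a ∈ I ∧ v ∉ I} = {I | I ∈ 𝓘 ∧ Iv a ⊆ I ∧ I ⊂ Iv v} ∧
    IsChain (· ⊆ ·) {I | I ∈ 𝓘 ∧ a ∈ I ∧ v ∉ I} := by

  obtain ⟨⟨-, hnest, -⟩, -, -⟩ := h𝓘
  constructor
  · ext I
    simp only [Set.mem_setOf_eq]
    constructor
    · rintro ⟨hI, haI, hvI⟩
      refine ⟨hI, (hIv a).2.2 I hI haI, ?_, fun h' => hvI (h' (hIv v).2.1)⟩
      rcases hnest I hI (Iv v) (hIv v).1 with h | h | h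
      · exact h
      · exact absurd (h (hIv v).2.1) hvI
      · exact absurd (Set.mem_inter haI ha) (by simp [h])
    · rintro ⟨hI, hsub, hss⟩
      exact ⟨hI, hsub (hIv a).2.1, fun hv => hss.2 ((hIv v).2.2 I hI hv)⟩
  · rintro I ⟨hI, haI, -⟩ J ⟨hJ, haJ, -⟩ _
    rcases hnest I hI J hJ with h | h | h
    · exact Or.inl h
    · exact Or.inr h
    · exact absurd (Set.mem_inter haI haJ) (by simp [h])
end
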